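/- For an m × n selection matrix S with n ≥ m+1, the following are equivalent: (a) rank(S) = m; (b) every nonempty subset I ⊆ [m] of rows contains a row i* one of whose two support columns is zero in all other rows of I; (c) there exists a permutation matrix P such that P·S is incremental. -/

import Mathlib

/-- The selection row `e_p - e_q` in `ℝ^n`. -/
def selRow {n : ℕ} (p q : Fin n) : Fin n → ℝ :=
  fun j => (if j = p then (1 : ℝ) else 0) - (if j = q then (1 : ℝ) else 0)

/-- A matrix is incremental if each row is supported on some column that is zero in all
earlier rows. -/
def Incremental {m n : ℕ} (S : Matrix (Fin m) (Fin n) ℝ) : Prop :=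
  ∀ k, ∃ c, S k c ≠ 0 ∧ ∀ j, j < k → S j c = 0

lemma selRow_support {n : ℕ} {p q : Fin n} (h : p ≠ q) (c : Fin n) :
    selRow p q c ≠ 0 ↔ c = p ∨ c = q := by
  unfold selRow
  by_cases hp : c = p <;> by_cases hq : c = q <;> simp_all

lemma selRow_sum {n : ℕ} (p q : Fin n) : ∑ c, selRow p q c = 0 := by
  simp [selRow, Finset.sum_sub_distrib]

/-- Incremental matrices have linearly independent rows. -/
lemma incremental_linearIndependent {m n : ℕ} {T : Matrix (Fin m) (Fin n) ℝ}
    (h : Incremental T) : LinearIndependent ℝ T := by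
  refine Fintype.linearIndependent_iff.mpr ?_
  intro g hg
  by_contra h'
  push_neg at h'
  obtain ⟨i0, hi0⟩ := h'
  set F : Finset (Fin m) := Finset.univ.filter (fun i => g i ≠ 0) with hF
  have hFne : F.Nonempty := ⟨i0, by simp [hF, hi0]⟩
  set k := F.max' hFne with hk
  have hkF : k ∈ F := F.max'_mem hFne
  have hgk : g k ≠ 0 := by simpa [hF] using hkF
  obtain ⟨c, hc, hz⟩ := h k
  have hgc : (∑ i, g i • T i) c = 0 := by rw [hg]; rfl
  rw [Finset.sum_apply] at hgc
  have hsingle : ∑ i, (g i • T i) c = g k * T k c := by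
    apply Finset.sum_eq_single
    · intro j _ hjk
      rcases lt_or_gt_of_ne hjk with hlt | hgt
      · simp [hz j hlt]
      · have : g j = 0 := by
          by_contra hgj
          exact absurd (F.le_max' j (by simp [hF, hgj])) (not_le_of_gt hgt)
        simp [this]
    · intro hk'; exact absurd (Finset.mem_univ k) hk'
  rw [hsingle] at hgc
  rcases mul_eq_zero.mp hgc with h1 | h2
  · exact hgk h1
  · exact hc h2

/-- Full row rank iff linearly independent rows. -/
lemma rank_iff_rows {m n : ℕ} (S : Matrix (Fin m) (Fin n) ℝ) :
    S.rank = m ↔ LinearIndependent ℝ S := by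
  rw [Matrix.rank_eq_finrank_span_row]
  have h := linearIndependent_iff_card_eq_finrank_span (R := ℝ) (b := S.row)
  rw [Set.finrank, Fintype.card_fin] at h
  exact eq_comm.trans h.symm

/-- From the subset property one gets an incremental ordering of any subset. -/
lemma exists_order {m n : ℕ} (S : Matrix (Fin m) (Fin n) ℝ)
    (hb : ∀ I : Finset (Fin m), I.Nonempty →
      ∃ i ∈ I, ∃ c, S i c ≠ 0 ∧ ∀ j ∈ I, j ≠ i → S j c = 0) :
    ∀ I : Finset (Fin m), ∃ f : Fin I.card → Fin m, Function.Injective f ∧ (∀ k, f k ∈ I) ∧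
      ∀ k, ∃ c, S (f k) c ≠ 0 ∧ ∀ j, j < k → S (f j) c = 0 := by
  intro I
  induction I using Finset.strongInduction with
  | _ I ih =>
    rcases I.eq_empty_or_nonempty with rfl | hne
    · refine ⟨fun k => absurd k.2 (by simp), ?_, ?_, ?_⟩ <;>
        (intro k; exact absurd k.2 (by simp))
    · obtain ⟨i, hiI, c0, hc0, hpriv⟩ := hb I hne
      obtain ⟨f', hinj', hmem', hincr'⟩ := ih (I.erase i) (Finset.erase_ssubset hiI)
      have hpos : 1 ≤ I.card := Finset.card_pos.mpr hne
      have hcard : I.card = (I.erase i).card + 1 := by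
        rw [Finset.card_erase_of_mem hiI]; omega
      refine ⟨fun k => if h : (k : ℕ) < (I.erase i).card then f' ⟨k, h⟩ else i, ?_, ?_, ?_⟩
      · intro k1 k2 h12
        dsimp only at h12
        split_ifs at h12 with h1 h2 h2
        · have h' := hinj' h12
          rw [Fin.mk.injEq] at h'
          exact Fin.ext h'
        · exact absurd (hmem' ⟨↑k1, h1⟩) (by rw [h12]; exact Finset.notMem_erase i I)
        · exact absurd (hmem' ⟨↑k2, h2⟩) (by rw [← h12]; exact Finset.notMem_erase i I)
        · have := k1.isLt; have := k2.isLt; exact Fin.ext (by omega)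
      · intro k
        dsimp only
        split_ifs with h
        · exact Finset.mem_of_mem_erase (hmem' _)
        · exact hiI
      · intro k
        dsimp only
        split_ifs with h
        · obtain ⟨c, hc, hz⟩ := hincr' ⟨k, h⟩
          refine ⟨c, hc, fun j hj => ?_⟩
          have hj' : (j : ℕ) < (I.erase i).card := lt_trans hj h
          simp only [dif_pos hj']
          exact hz ⟨j, hj'⟩ hj
        · refine ⟨c0, hc0, fun j hj => ?_⟩
          have hj' : (j : ℕ) < (I.erase i).card := by
            have h1 := k.isLt; have h2 : (j : ℕ) < (k : ℕ) := hj; omega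
          simp only [dif_pos hj']
          have hmem := hmem' ⟨j, hj'⟩
          exact hpriv _ (Finset.mem_of_mem_erase hmem) (Finset.ne_of_mem_erase hmem)

/-- A "bad" subset (no row with a private column) forces linear dependence. -/
lemma bad_not_indep {m n : ℕ} (S : Matrix (Fin m) (Fin n) ℝ) (p q : Fin m → Fin n)
    (hpq : ∀ i, p i ≠ q i) (hS : ∀ i, S i = selRow (p i) (q i))
    (I : Finset (Fin m)) (hne : I.Nonempty)
    (hbad : ∀ i ∈ I, (∃ j ∈ I, j ≠ i ∧ S j (p i) ≠ 0) ∧ (∃ j ∈ I, j ≠ i ∧ S j (q i) ≠ 0)) :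
    ¬ LinearIndependent ℝ (fun i : ↥I => S i) := by
  intro hindep
  have hsupp : ∀ i c, S i c ≠ 0 ↔ c = p i ∨ c = q i := by
    intro i c; rw [hS i]; exact selRow_support (hpq i) c
  set V : Finset (Fin n) := I.biUnion (fun i => {p i, q i}) with hV
  have hmemV : ∀ v, v ∈ V ↔ ∃ i ∈ I, v = p i ∨ v = q i := by
    intro v; simp [hV, Finset.mem_biUnion]
  have hedge : ∀ i ∈ I, p i ∈ V ∧ q i ∈ V := by
    intro i hi; exact ⟨(hmemV _).mpr ⟨i, hi, Or.inl rfl⟩, (hmemV _).mpr ⟨i, hi, Or.inr rfl⟩⟩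
  -- degree at least 2
  have hdeg : ∀ v ∈ V, 2 ≤ (I.filter (fun i => v = p i ∨ v = q i)).card := by
    intro v hv
    obtain ⟨i, hiI, hvi⟩ := (hmemV v).mp hv
    obtain ⟨⟨jp, hjpI, hjpne, hjp⟩, ⟨jq, hjqI, hjqne, hjq⟩⟩ := hbad i hiI
    rw [Nat.succ_le_iff, Finset.one_lt_card]
    rcases hvi with hvp | hvq
    · refine ⟨i, ?_, jp, ?_, fun hij => hjpne hij.symm⟩
      · simp [Finset.mem_filter, hiI, hvp]
      · rcases (hsupp jp (p i)).mp hjp with h | h <;>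
          simp [Finset.mem_filter, hjpI, hvp, h]
    · refine ⟨i, ?_, jq, ?_, fun hij => hjqne hij.symm⟩
      · simp [Finset.mem_filter, hiI, hvq]
      · rcases (hsupp jq (q i)).mp hjq with h | h <;>
          simp [Finset.mem_filter, hjqI, hvq, h]
  -- double counting: V.card ≤ I.card
  have hsum : ∑ v ∈ V, (I.filter (fun i => v = p i ∨ v = q i)).card = 2 * I.card := by
    have hcf : ∀ v, (I.filter (fun i => v = p i ∨ v = q i)).card
        = ∑ i ∈ I, if v = p i ∨ v = q i then 1 else 0 := by
      intro v; rw [Finset.card_filter]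
    simp_rw [hcf]
    rw [Finset.sum_comm]
    have hinner : ∀ i ∈ I, (∑ v ∈ V, if v = p i ∨ v = q i then 1 else 0) = 2 := by
      intro i hi
      have hfe : V.filter (fun v => v = p i ∨ v = q i) = {p i, q i} := by
        ext v
        simp only [Finset.mem_filter, Finset.mem_insert, Finset.mem_singleton]
        constructor
        · rintro ⟨_, h⟩; exact h
        · rintro h
          refine ⟨?_, h⟩
          rcases h with h | h
          · rw [h]; exact (hedge i hi).1
          · rw [h]; exact (hedge i hi).2
      rw [← Finset.card_filter, hfe, Finset.card_pair (hpq i)]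
    rw [Finset.sum_congr rfl hinner]
    simp [mul_comm]
  have hVI : V.card ≤ I.card := by
    have h1 : V.card • 2 ≤ ∑ v ∈ V, (I.filter (fun i => v = p i ∨ v = q i)).card :=
      Finset.card_nsmul_le_sum V _ 2 hdeg
    rw [hsum] at h1
    simp only [smul_eq_mul] at h1
    omega
  -- set up the dimension bound
  obtain ⟨i0, hi0⟩ := hne
  set v0 := p i0 with hv0
  have hv0V : v0 ∈ V := (hedge i0 hi0).1
  set W := V.erase v0 with hW
  have hrowsum : ∀ i : Fin m, ∑ c, S i c = 0 := by
    intro i; simp only [hS i]; exact selRow_sum _ _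
  have hfin : LinearIndependent ℝ (fun (i : ↥I) (v : ↥W) => S ↑i ↑v) := by
    rw [Fintype.linearIndependent_iff]
    intro g hg
    set x : Fin n → ℝ := ∑ i : ↥I, g i • S ↑i with hx
    have hxW : ∀ v : ↥W, x ↑v = 0 := by
      intro v
      have h1 := congrFun hg v
      rw [Finset.sum_apply] at h1
      simpa [hx, Finset.sum_apply] using h1
    have hxout : ∀ c, c ∉ V → x c = 0 := by
      intro c hc
      have hz : ∀ i : ↥I, S ↑i c = 0 := by
        intro i
        by_contra hne'
        exact hc ((hmemV c).mpr ⟨↑i, i.2, (hsupp ↑i c).mp hne'⟩)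
      simp [hx, Finset.sum_apply, hz]
    have hxsum : ∑ c, x c = 0 := by
      simp only [hx, Finset.sum_apply, Pi.smul_apply, smul_eq_mul]
      rw [Finset.sum_comm]
      have : ∀ i : ↥I, ∑ c, g i * S ↑i c = 0 := by
        intro i
        rw [← Finset.mul_sum, hrowsum, mul_zero]
      simp [this]
    have hxv0 : x v0 = 0 := by
      have h1 : ∑ c, x c = x v0 := by
        apply Finset.sum_eq_single
        · intro c _ hcv
          by_cases hcV : c ∈ V
          · exact hxW ⟨c, Finset.mem_erase.mpr ⟨hcv, hcV⟩⟩
          · exact hxout c hcV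
        · intro h; exact absurd (Finset.mem_univ v0) h
      rw [← h1]; exact hxsum
    have hx0 : x = 0 := by
      funext c
      by_cases hcV : c ∈ V
      · by_cases hcv : c = v0
        · rw [hcv]; exact hxv0
        · exact hxW ⟨c, Finset.mem_erase.mpr ⟨hcv, hcV⟩⟩
      · exact hxout c hcV
    exact Fintype.linearIndependent_iff.mp hindep g hx0
  have hcardle := hfin.fintype_card_le_finrank
  rw [Module.finrank_fintype_fun_eq_card] at hcardle
  rw [Fintype.card_coe, Fintype.card_coe] at hcardle
  have hWcard : W.card = V.card - 1 := Finset.card_erase_of_mem hv0V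
  have hIpos : 1 ≤ I.card := Finset.card_pos.mpr ⟨i0, hi0⟩
  omega

/-- For a selection matrix with `n ≥ m+1`, full row rank, the subset-new-item property,
and existence of an incremental row permutation are all equivalent. -/
theorem selection_tfae {m n : ℕ} (hn : m + 1 ≤ n)
    (S : Matrix (Fin m) (Fin n) ℝ) (p q : Fin m → Fin n)
    (hpq : ∀ i, p i ≠ q i) (hS : ∀ i, S i = selRow (p i) (q i)) :
    (S.rank = m ↔
      ∀ I : Finset (Fin m), I.Nonempty →
        ∃ i ∈ I, (∀ j ∈ I, j ≠ i → S j (p i) = 0) ∨ (∀ j ∈ I, j ≠ i → S j (q i) = 0)) ∧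
    (S.rank = m ↔
      ∃ σ : Equiv.Perm (Fin m), Incremental (σ.permMatrix ℝ * S)) := by
  have hSp : ∀ i, S i (p i) = 1 := by
    intro i; simp [hS i, selRow, hpq i]
  have hSq : ∀ i, S i (q i) = -1 := by
    intro i; simp [hS i, selRow, Ne.symm (hpq i)]
  have hab : S.rank = m →
      ∀ I : Finset (Fin m), I.Nonempty →
        ∃ i ∈ I, (∀ j ∈ I, j ≠ i → S j (p i) = 0) ∨ (∀ j ∈ I, j ≠ i → S j (q i) = 0) := by
    intro ha I hne
    by_contra hbad
    push_neg at hbad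
    have hindep := (rank_iff_rows S).mp ha
    exact bad_not_indep S p q hpq hS I hne hbad
      (hindep.comp (fun i : ↥I => (i : Fin m)) Subtype.val_injective)
  have hbc : (∀ I : Finset (Fin m), I.Nonempty →
      ∃ i ∈ I, (∀ j ∈ I, j ≠ i → S j (p i) = 0) ∨ (∀ j ∈ I, j ≠ i → S j (q i) = 0)) →
      ∃ σ : Equiv.Perm (Fin m), Incremental (σ.permMatrix ℝ * S) := by
    intro hb
    have hb' : ∀ I : Finset (Fin m), I.Nonempty →
        ∃ i ∈ I, ∃ c, S i c ≠ 0 ∧ ∀ j ∈ I, j ≠ i → S j c = 0 := by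
      intro I hne
      obtain ⟨i, hi, h⟩ := hb I hne
      rcases h with h | h
      · exact ⟨i, hi, p i, by rw [hSp i]; norm_num, h⟩
      · exact ⟨i, hi, q i, by rw [hSq i]; norm_num, h⟩
    obtain ⟨f, hinj, -, hincr⟩ := exists_order S hb' Finset.univ
    have hcard : (Finset.univ : Finset (Fin m)).card = m := Finset.card_fin m
    set g : Fin m → Fin m := fun k => f (Fin.cast hcard.symm k) with hg
    have hginj : Function.Injective g := hinj.comp (Fin.cast_injective _)
    have hgbij := Finite.injective_iff_bijective.mp hginj
    set σ : Equiv.Perm (Fin m) := Equiv.ofBijective g hgbij with hσ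
    refine ⟨σ, ?_⟩
    have hmat : σ.permMatrix ℝ * S = S.submatrix σ id :=
      PEquiv.toMatrix_toPEquiv_mul _ S
    rw [hmat]
    intro k
    obtain ⟨c, hc, hz⟩ := hincr (Fin.cast hcard.symm k)
    refine ⟨c, hc, fun j hj => hz (Fin.cast hcard.symm j) hj⟩
  have hca : (∃ σ : Equiv.Perm (Fin m), Incremental (σ.permMatrix ℝ * S)) → S.rank = m := by
    rintro ⟨σ, hIncr⟩
    have hT := incremental_linearIndependent hIncr
    rw [PEquiv.toMatrix_toPEquiv_mul] at hT
    have h2 := hT.comp σ.symm σ.symm.injective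
    have heq : (S.submatrix (⇑σ) id) ∘ ⇑σ.symm = S := by
      funext i
      funext c
      simp [Matrix.submatrix_apply, Function.comp]
    rw [heq] at h2
    exact (rank_iff_rows S).mpr h2
  exact ⟨⟨hab, fun hb => hca (hbc hb)⟩, ⟨fun ha => hbc (hab ha), hca⟩⟩
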